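/- arXiv:2402.16357 — 7 statements merged into one kernel-verified Lean document; each statement's English description precedes it below -/
import Mathlib

section
/- Let K_1, …, K_r be the conjugacy classes of G. For each j, let (a_{K_j,i})_{i≥0} be the sequence in RS(F,ℚ) whose first d terms (a_{K_j,0}, …, a_{K_j,d−1}) are given by the j-th column of the d×r matrix P · Γ_ξ^{−1} · κ. Then for all but finitely many prime numbers p (in particular p unramified in L), one has a_{K_j,p} ≡ 1 (mod p) if the Frobenius conjugacy class Frob_p of p in G is contained in K_j, and a_{K_j,p} ≡ 0 (mod p) otherwise. -/
open scoped BigOperators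

/-- `x ≡ y (mod p)` for rational numbers: `x - y = p·(m/n)` with `p ∤ n`. -/
def RatModEq (p : ℕ) (x y : ℚ) : Prop :=
  ∃ m n : ℤ, ¬ (p : ℤ) ∣ n ∧ (x - y) * (n : ℚ) = (p : ℚ) * (m : ℚ)

/-- `Frob : Gal(L/ℚ)` is a Frobenius automorphism at the prime ideal `𝔭` of the ring of
integers of `L` for the prime `p`: `Frob x ≡ x^p (mod 𝔭)` for every algebraic integer
`x` of `L`. -/
def IsFrobeniusAt (L : Type*) [Field L] [CharZero L]
    (p : ℕ) (𝔭 : Ideal (NumberField.RingOfIntegers L)) (Frob : L ≃ₐ[ℚ] L) : Prop :=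
  ∀ x y : NumberField.RingOfIntegers L,
    algebraMap (NumberField.RingOfIntegers L) L y =
      Frob (algebraMap (NumberField.RingOfIntegers L) L x) →
    y - x ^ p ∈ 𝔭

/-!
Put `b := Γ_ξ⁻¹ κ`. Every conjugate of `ξ` is a root of `F`, so `i ↦ ∑_σ (σ⁻¹ξ)^i b_σ` satisfies
the recurrence and, having the same first `d` terms, equals `a`; on the other hand `Γ_ξ b = κ`
says `∑_σ τ(σ⁻¹ξ) b_σ = [τ ∈ K]`. After clearing the denominators of the `b_σ` by an integer `N`,
the Frobenius congruence `Frob x ≡ x^p (mod 𝔭)` gives `N a_p ≡ N [Frob ∈ K] (mod 𝔭)`. Both sides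
are rational algebraic integers, hence in `ℤ`, so the congruence holds modulo `𝔭 ∩ ℤ = pℤ`, and it
can be divided by `N` for `p ∤ N`. The matrix `Γ_ξ` is invertible by Dedekind's independence of
characters.
-/

open Polynomial NumberField
open scoped Matrix

theorem isUnit_det_of_normal_basis {K L : Type*} [Field K] [Field L] [Algebra K L]
    [FiniteDimensional K L] [DecidableEq Gal(L/K)] {ξ : L} (b : Module.Basis Gal(L/K) K L)
    (hb : ∀ σ, b σ = σ ξ) : IsUnit (Matrix.of fun σ τ : Gal(L/K) => (σ * τ⁻¹) ξ).det := by
  rw [isUnit_iff_ne_zero, Ne, ← Matrix.exists_vecMul_eq_zero_iff]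
  rintro ⟨v, hv0, hv⟩
  have hsum : ∑ σ : Gal(L/K), v σ • (σ : L →ₐ[K] L).toLinearMap = 0 := by
    refine b.ext fun τ => ?_
    simpa [hb, Matrix.vecMul, dotProduct, AlgEquiv.mul_apply, AlgEquiv.aut_inv]
      using congrFun hv τ⁻¹
  exact hv0 (funext (Fintype.linearIndependent_iff.mp
    ((linearIndependent_algHom_toLinearMap K L L).comp _ (algEquivEquivAlgHom K L).injective)
    v hsum))

theorem eq_sum_pow_mul_of_recurrence {R ι : Type*} [CommRing R] [Fintype ι] {d : ℕ}
    {c : Fin d → R} {u : ℕ → R} (hu : ∀ i, u (i + d) = -∑ j, c j * u (i + j)) {r w : ι → R}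
    (hr : ∀ k, r k ^ d + ∑ j, c j * r k ^ (j : ℕ) = 0)
    (hinit : ∀ i : Fin d, u i = ∑ k, r k ^ (i : ℕ) * w k) (i : ℕ) :
    u i = ∑ k, r k ^ i * w k := by
  let E : LinearRecurrence R := ⟨d, -c⟩
  have hsol : E.IsSolution fun i => ∑ k, r k ^ i * w k := by
    intro n
    have hrd (k : ι) : r k ^ d = -∑ j, c j * r k ^ (j : ℕ) := eq_neg_of_add_eq_zero_left (hr k)
    simp only [E, Pi.neg_apply, neg_mul, Finset.sum_neg_distrib, Finset.mul_sum, pow_add, hrd]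
    rw [Finset.sum_comm]
    simp only [mul_neg, neg_mul, Finset.sum_neg_distrib]
    refine congrArg Neg.neg (Finset.sum_congr rfl fun k _ => ?_)
    rw [Finset.mul_sum, Finset.sum_mul]
    exact Finset.sum_congr rfl fun j _ => by ring
  have hE : E.IsSolution u := fun i => by simp [E, hu i]
  rw [E.eq_mk_of_is_sol_of_eq_init hE hinit, E.eq_mk_of_is_sol_of_eq_init hsol fun _ => rfl]

theorem exists_eq_mul_of_mem_of_coe_eq {L : Type*} [Field L] [CharZero L] {p : ℕ}
    (hp : p.Prime) {𝔭 : Ideal (𝓞 L)} (h𝔭 : 𝔭 ≠ ⊤) (hp𝔭 : (p : 𝓞 L) ∈ 𝔭) {y : 𝓞 L} (hy : y ∈ 𝔭)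
    {q : ℚ} (hyq : algebraMap (𝓞 L) L y = algebraMap ℚ L q) : ∃ k : ℤ, q = p * k := by
  obtain ⟨m, rfl⟩ : ∃ m : ℤ, (m : ℚ) = q := IsIntegrallyClosed.isIntegral_iff.mp
    ((isIntegral_algebraMap_iff (algebraMap ℚ L).injective).mp (hyq ▸ y.isIntegral_coe))
  have hmy : (m : 𝓞 L) = y := RingOfIntegers.coe_injective (by simp [hyq])
  suffices (p : ℤ) ∣ m by obtain ⟨k, rfl⟩ := this; exact ⟨k, by push_cast; ring⟩
  by_contra hpm
  obtain ⟨u, v, huv⟩ := ((Nat.prime_iff_prime_int.mp hp).coprime_iff_not_dvd).mpr hpm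
  refine h𝔭 (𝔭.eq_top_of_isUnit_mem (x := 1) ?_ isUnit_one)
  have h1 := congrArg (Int.cast : ℤ → 𝓞 L) huv
  push_cast at h1
  rw [← h1, hmy]
  exact 𝔭.add_mem (𝔭.mul_mem_left _ hp𝔭) (𝔭.mul_mem_left _ hy)

theorem ratModEq_of_isFrobeniusAt {L : Type*} [Field L] [CharZero L] {p : ℕ} (hp : p.Prime)
    {𝔭 : Ideal (𝓞 L)} (h𝔭 : 𝔭 ≠ ⊤) (hp𝔭 : (p : 𝓞 L) ∈ 𝔭) {Frob : L ≃ₐ[ℚ] L}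
    (hFrob : IsFrobeniusAt L p 𝔭 Frob) {ι : Type*} [Fintype ι] {x w : ι → L}
    (hx : ∀ i, IsIntegral ℤ (x i)) {N : ℤ} (hN : ∀ i, IsIntegral ℤ (N • w i))
    (hpN : ¬ (p : ℤ) ∣ N) {q r : ℚ} (hq : algebraMap ℚ L q = ∑ i, x i ^ p * w i)
    (hr : algebraMap ℚ L r = ∑ i, Frob (x i) * w i) : RatModEq p q r := by
  choose X hX using fun i => (IsIntegralClosure.isIntegral_iff (A := 𝓞 L)).mp (hx i)
  choose β hβ using fun i => (IsIntegralClosure.isIntegral_iff (A := 𝓞 L)).mp (hN i)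
  let φ := RingOfIntegers.mapRingHom (Frob : L →+* L)
  let y := ∑ i, β i * (X i ^ p - φ (X i))
  have hy : y ∈ 𝔭 := by
    refine 𝔭.sum_mem fun i _ => 𝔭.mul_mem_left _ ?_
    simpa using 𝔭.neg_mem (hFrob (X i) (φ (X i)) rfl)
  have hyq : algebraMap (𝓞 L) L y = algebraMap ℚ L (N * (q - r)) := by
    rw [map_mul, map_sub, map_intCast, hq, hr, ← Finset.sum_sub_distrib, Finset.mul_sum, map_sum]
    refine Finset.sum_congr rfl fun i _ => ?_
    have hφ : algebraMap (𝓞 L) L (φ (X i)) = Frob (x i) := by rw [← hX]; rfl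
    rw [map_mul, map_sub, map_pow, hφ, hβ, hX, zsmul_eq_mul]
    ring
  obtain ⟨k, hk⟩ := exists_eq_mul_of_mem_of_coe_eq hp h𝔭 hp𝔭 hy hyq
  exact ⟨k, N, hpN, by linear_combination hk⟩

theorem stmt0_general (L : Type*) [Field L] [CharZero L] [FiniteDimensional ℚ L]
    [DecidableEq (L ≃ₐ[ℚ] L)]
    (d : ℕ)
    (c : Fin d → ℤ) (F : Polynomial ℤ)
    (hF : F = Polynomial.X ^ d + ∑ j : Fin d, Polynomial.C (c j) * Polynomial.X ^ (j : ℕ))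
    (ξ : L) (hξ : Polynomial.aeval ξ F = 0)
    (hNB : ∃ b : Module.Basis (L ≃ₐ[ℚ] L) ℚ L, ∀ σ : L ≃ₐ[ℚ] L, b σ = σ ξ)
    (K : ConjClasses (L ≃ₐ[ℚ] L)) [DecidablePred (· ∈ K.carrier)]
    (a : ℕ → ℚ)
    (ha : ∀ i, a (i + d) = -∑ j : Fin d, (c j : ℚ) * a (i + (j : ℕ)))
    (hinit : ∀ i : Fin d, algebraMap ℚ L (a (i : ℕ)) =
      ∑ σ : L ≃ₐ[ℚ] L, (σ⁻¹ ξ) ^ (i : ℕ) *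
        ((Matrix.of fun σ' τ' : L ≃ₐ[ℚ] L => (σ' * τ'⁻¹) ξ)⁻¹.mulVec
          (fun τ : L ≃ₐ[ℚ] L => if τ ∈ K.carrier then (1 : L) else 0)) σ) :
    ∃ S : Finset ℕ, ∀ p : ℕ, p.Prime → p ∉ S →
      ∀ 𝔭 : Ideal (NumberField.RingOfIntegers L), 𝔭.IsMaximal →
        (p : NumberField.RingOfIntegers L) ∈ 𝔭 →
        ∀ Frob : L ≃ₐ[ℚ] L, IsFrobeniusAt L p 𝔭 Frob →
          ((Frob ∈ K.carrier → RatModEq p (a p) 1) ∧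
           (Frob ∉ K.carrier → RatModEq p (a p) 0)) := by
  obtain ⟨B, hB⟩ := hNB
  set Γ := Matrix.of fun σ τ : L ≃ₐ[ℚ] L => (σ * τ⁻¹) ξ
  set κ : (L ≃ₐ[ℚ] L) → L := fun τ => if τ ∈ K.carrier then 1 else 0
  set b := Γ⁻¹ *ᵥ κ
  have hΓb : Γ *ᵥ b = κ := by
    rw [Matrix.mulVec_mulVec, Matrix.mul_nonsing_inv _ (isUnit_det_of_normal_basis B hB),
      Matrix.one_mulVec]
  have hconj (σ : L ≃ₐ[ℚ] L) : aeval (σ ξ) F = 0 := by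
    simpa [hξ] using aeval_algHom_apply ((σ : L →ₐ[ℚ] L).restrictScalars ℤ) ξ F
  have hclosed (i : ℕ) : algebraMap ℚ L (a i) = ∑ σ : L ≃ₐ[ℚ] L, (σ⁻¹ ξ) ^ i * b σ :=
    eq_sum_pow_mul_of_recurrence (u := fun i => algebraMap ℚ L (a i)) (c := fun j => (c j : L))
      (r := fun σ : L ≃ₐ[ℚ] L => σ⁻¹ ξ)
      (fun i => by simp only [ha, map_neg, map_sum, map_mul, map_intCast])
      (fun σ => by simpa [hF] using hconj σ⁻¹) hinit i
  have hξint : IsIntegral ℤ ξ :=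
    ⟨F, hF ▸ monic_X_pow_add (degree_sum_fin_lt c), by rwa [← aeval_def]⟩
  obtain ⟨N, hN0, hN⟩ : ∃ N : ℤ, N ≠ 0 ∧ ∀ σ, IsIntegral ℤ (N • b σ) := by
    classical
    obtain ⟨N, hN0, hN⟩ := exists_integral_multiples ℤ ℚ (Finset.univ.image b)
    exact ⟨N, hN0, fun σ => hN _ (Finset.mem_image_of_mem b (Finset.mem_univ σ))⟩
  refine ⟨N.natAbs.primeFactors, fun p hp hpN 𝔭 h𝔭 hp𝔭 Frob hFrob => ?_⟩
  have key (ε : ℚ) (hε : algebraMap ℚ L ε = κ Frob) : RatModEq p (a p) ε :=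
    ratModEq_of_isFrobeniusAt hp h𝔭.ne_top hp𝔭 hFrob
      (fun σ => hξint.map ((σ⁻¹ : L ≃ₐ[ℚ] L).toAlgHom.restrictScalars ℤ)) hN
      (fun hdvd => hpN (Nat.mem_primeFactors.mpr
        ⟨hp, Int.natCast_dvd.mp hdvd, Int.natAbs_ne_zero.mpr hN0⟩))
      (hclosed p) (hε.trans (congrFun hΓb Frob).symm)
  exact ⟨fun h => key 1 (by simp [κ, h]), fun h => key 0 (by simp [κ, h])⟩

/-- Let `(a_i)_{i≥0} ∈ RS(F,ℚ)` be the sequence whose first `d` terms are the column of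
`P Γ_ξ⁻¹ κ` corresponding to the conjugacy class `K` of `G = Gal(L/ℚ)`.  Then for all but
finitely many primes `p`, `a_p ≡ 1 (mod p)` if the Frobenius conjugacy class of `p` is
`K`, and `a_p ≡ 0 (mod p)` otherwise. -/
theorem stmt0 (L : Type*) [Field L] [CharZero L] [FiniteDimensional ℚ L] [IsGalois ℚ L]
    [DecidableEq (L ≃ₐ[ℚ] L)]
    (d : ℕ) (hd : 0 < d) (hdeg : Module.finrank ℚ L = d)
    (c : Fin d → ℤ) (F : Polynomial ℤ)
    (hF : F = Polynomial.X ^ d + ∑ j : Fin d, Polynomial.C (c j) * Polynomial.X ^ (j : ℕ))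
    (hFirr : Irreducible (F.map (Int.castRingHom ℚ)))
    (ξ : L) (hξ : Polynomial.aeval ξ F = 0)
    (hNB : ∃ b : Module.Basis (L ≃ₐ[ℚ] L) ℚ L, ∀ σ : L ≃ₐ[ℚ] L, b σ = σ ξ)
    (K : ConjClasses (L ≃ₐ[ℚ] L)) [DecidablePred (· ∈ K.carrier)]
    (a : ℕ → ℚ)
    (ha : ∀ i, a (i + d) = -∑ j : Fin d, (c j : ℚ) * a (i + (j : ℕ)))
    (hinit : ∀ i : Fin d, algebraMap ℚ L (a (i : ℕ)) =
      ∑ σ : L ≃ₐ[ℚ] L, (σ⁻¹ ξ) ^ (i : ℕ) *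
        ((Matrix.of fun σ' τ' : L ≃ₐ[ℚ] L => (σ' * τ'⁻¹) ξ)⁻¹.mulVec
          (fun τ : L ≃ₐ[ℚ] L => if τ ∈ K.carrier then (1 : L) else 0)) σ) :
    ∃ S : Finset ℕ, ∀ p : ℕ, p.Prime → p ∉ S →
      ∀ 𝔭 : Ideal (NumberField.RingOfIntegers L), 𝔭.IsMaximal →
        (p : NumberField.RingOfIntegers L) ∈ 𝔭 →
        ∀ Frob : L ≃ₐ[ℚ] L, IsFrobeniusAt L p 𝔭 Frob →
          ((Frob ∈ K.carrier → RatModEq p (a p) 1) ∧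
           (Frob ∉ K.carrier → RatModEq p (a p) 0)) :=
  stmt0_general L d c F hF ξ hξ hNB K a ha hinit
end

section
/- Let (a_{K_j,i})_{i≥0} be the sequence in RS(F,ℚ) whose first d terms are the j-th column of P · Γ_ξ^{−1} · κ. Then for every integer i ≥ 0, a_{K_j,i} = (1/det Γ_ξ) · Σ_{σ∈G} Σ_{τ∈K_j} σ(ξ^i) · ∂_{στ}(ξ). -/
open scoped BigOperators

/-- The group matrix `Γ = [X_{στ⁻¹}]` of a finite group `G`, over `ℚ[X_σ : σ ∈ G]`. -/
noncomputable def groupMatrix (G : Type*) [Group G] [Fintype G] [DecidableEq G] :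
    Matrix G G (MvPolynomial G ℚ) :=
  Matrix.of fun σ τ : G => MvPolynomial.X (σ * τ⁻¹)

/-- `∂_τ = (1/|G|) ∂(det Γ)/∂X_τ`. -/
noncomputable def groupDetDeriv (G : Type*) [Group G] [Fintype G] [DecidableEq G] (τ : G) :
    MvPolynomial G ℚ :=
  ((Fintype.card G : ℚ))⁻¹ • MvPolynomial.pderiv τ (groupMatrix G).det

/-!
By Cramer's rule `Γ_ξ⁻¹ = (det Γ_ξ)⁻¹ • adj Γ_ξ`. The adjugate of a group matrix is invariant under
right translation of both indices, so it is determined by its first row, and differentiating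
`det Γ` row by row identifies `∂_τ` with the entry `(adj Γ)_{1,τ}`. As `K` is stable under
conjugation, the `σ`-entry of the column `Γ_ξ⁻¹ κ_K` is `(det Γ_ξ)⁻¹ Σ_{τ∈K} ∂_{σ⁻¹τ}(ξ)`; hence the
right-hand side equals `Σ_σ (σ⁻¹ξ)^i (Γ_ξ⁻¹ κ_K)_σ`. This is a combination of the geometric
sequences of the roots `σ⁻¹ξ` of `F`, so it lies in `RS(F)`, and it agrees with `a_K` on the first
`d` terms.
-/

open Finset Matrix

namespace Derivation

theorem map_finset_prod {R A M ι : Type*} [CommSemiring R] [CommSemiring A] [AddCommMonoid M]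
    [Algebra R A] [Module A M] [Module R M] [DecidableEq ι] (D : Derivation R A M)
    (s : Finset ι) (f : ι → A) :
    D (∏ j ∈ s, f j) = ∑ j ∈ s, (∏ k ∈ s.erase j, f k) • D (f j) := by
  induction s using Finset.induction_on with
  | empty => simp
  | insert a s ha ih =>
    rw [prod_insert ha, leibniz, ih, sum_insert ha, erase_insert ha, smul_sum, add_comm]
    congr 1
    refine sum_congr rfl fun j hj => ?_
    rw [erase_insert_of_ne (ne_of_mem_of_not_mem hj ha).symm, prod_insert (by simp [ha]), mul_smul]

theorem map_det {R A n : Type*} [CommRing R] [CommRing A] [Algebra R A] [Fintype n]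
    [DecidableEq n] (D : Derivation R A A) (M : Matrix n n A) :
    D M.det = ∑ i, (M.updateRow i fun j => D (M i j)).det := by
  simp only [det_apply', map_sum, leibniz, map_finset_prod, Derivation.map_intCast, smul_eq_mul,
    Finset.mul_sum]
  rw [sum_comm]
  refine sum_congr rfl fun π _ => ?_
  rw [mul_zero, add_zero]
  refine Fintype.sum_equiv π _ _ fun i => ?_
  rw [← prod_erase_mul univ _ (mem_univ i), updateRow_self]
  congr 2
  exact prod_congr rfl fun k hk => by rw [updateRow_ne (π.injective.ne (ne_of_mem_erase hk))]

end Derivation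

section GroupMatrix

variable {G R : Type*} [Group G]

def groupMatrixOf (f : G → R) : Matrix G G R :=
  Matrix.of fun σ τ => f (σ * τ⁻¹)

theorem submatrix_mulRight_groupMatrixOf (f : G → R) (g : G) :
    (groupMatrixOf f).submatrix (Equiv.mulRight g) (Equiv.mulRight g) = groupMatrixOf f := by
  ext σ τ
  simp [groupMatrixOf, mul_assoc]

variable [Fintype G] [DecidableEq G]

theorem groupMatrix_eq_groupMatrixOf : groupMatrix G = groupMatrixOf MvPolynomial.X := rfl

theorem adjugate_groupMatrixOf_mul_right [CommRing R] (f : G → R) (σ τ g : G) :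
    (groupMatrixOf f).adjugate (σ * g) (τ * g) = (groupMatrixOf f).adjugate σ τ := by
  conv_rhs => rw [← submatrix_mulRight_groupMatrixOf f g, adjugate_submatrix_equiv_self]
  rfl

theorem groupDetDeriv_eq_adjugate (τ : G) :
    groupDetDeriv G τ = (groupMatrix G).adjugate 1 τ := by
  have hrow : ∀ σ, (fun ρ => MvPolynomial.pderiv τ (groupMatrix G σ ρ)) =
      Pi.single (τ⁻¹ * σ) 1 := by
    intro σ
    ext ρ : 1
    have hiff : σ * ρ⁻¹ = τ ↔ ρ = τ⁻¹ * σ := by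
      constructor <;> rintro rfl <;> group
    simp only [groupMatrix, of_apply, MvPolynomial.pderiv_X, Pi.single_apply, hiff]
  have hterm : ∀ σ, ((groupMatrix G).updateRow σ
      fun ρ => MvPolynomial.pderiv τ (groupMatrix G σ ρ)).det = (groupMatrix G).adjugate 1 τ := by
    intro σ
    rw [hrow, ← adjugate_apply, groupMatrix_eq_groupMatrixOf,
      ← adjugate_groupMatrixOf_mul_right _ 1 τ (τ⁻¹ * σ), one_mul, mul_inv_cancel_left]
  rw [groupDetDeriv, Derivation.map_det, sum_congr rfl fun σ _ => hterm σ, sum_const, card_univ,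
    ← Nat.cast_smul_eq_nsmul ℚ, smul_smul, inv_mul_cancel₀ (by simp), one_smul]

theorem aeval_groupDetDeriv {A : Type*} [CommRing A] [Algebra ℚ A] (f : G → A) (τ : G) :
    MvPolynomial.aeval f (groupDetDeriv G τ) = (groupMatrixOf f).adjugate 1 τ := by
  have hmap : (MvPolynomial.aeval f).mapMatrix (groupMatrix G) = groupMatrixOf f := by
    ext σ ρ
    simp [groupMatrix, groupMatrixOf]
  rw [groupDetDeriv_eq_adjugate, ← hmap, ← AlgHom.map_adjugate]
  rfl

theorem inv_groupMatrixOf_mulVec_apply {k : Type*} [Field k] (f χ : G → k)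
    (hχ : ∀ g h, χ (h * g * h⁻¹) = χ g) (σ : G) :
    ((groupMatrixOf f)⁻¹ *ᵥ χ) σ =
      (groupMatrixOf f).det⁻¹ * ∑ τ, (groupMatrixOf f).adjugate 1 (σ⁻¹ * τ) * χ τ := by
  rw [Matrix.inv_def, Ring.inverse_eq_inv, smul_mulVec, Pi.smul_apply, smul_eq_mul, mulVec,
    dotProduct]
  congr 1
  refine Fintype.sum_equiv (MulAut.conj σ).toEquiv _ _ fun τ => ?_
  simp only [MulEquiv.toEquiv_eq_coe, MulEquiv.coe_toEquiv, MulAut.conj_apply, hχ]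
  rw [← adjugate_groupMatrixOf_mul_right f σ τ σ⁻¹, mul_inv_cancel, mul_assoc, inv_mul_cancel_left]

end GroupMatrix

namespace LinearRecurrence

variable {R : Type*} [CommRing R]

theorem charPoly_mk_neg (d : ℕ) (c : Fin d → R) :
    (⟨d, -c⟩ : LinearRecurrence R).charPoly =
      Polynomial.X ^ d + ∑ j, Polynomial.C (c j) * Polynomial.X ^ (j : ℕ) := by
  simp [charPoly, ← Polynomial.C_mul_X_pow_eq_monomial, sub_eq_add_neg]

theorem isSolution_sum_geom_mul (E : LinearRecurrence R) {ι : Type*} [Fintype ι] (x w : ι → R)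
    (hx : ∀ i, E.charPoly.IsRoot (x i)) : E.IsSolution fun n => ∑ i, x i ^ n * w i := by
  have hgeom : ∀ i, (fun n => x i ^ n) ∈ E.solSpace :=
    fun i => (E.geom_sol_iff_root_charPoly _).2 (hx i)
  rw [is_sol_iff_mem_solSpace]
  convert E.solSpace.sum_mem (t := univ) fun i _ => E.solSpace.smul_mem (w i) (hgeom i) using 1
  ext n
  simp [mul_comm]

end LinearRecurrence

theorem ConjClasses.mul_mul_inv_mem_carrier_iff {G : Type*} [Group G] (K : ConjClasses G)
    (g h : G) : h * g * h⁻¹ ∈ K.carrier ↔ g ∈ K.carrier := by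
  rw [mem_carrier_iff_mk_eq, mem_carrier_iff_mk_eq,
    mk_eq_mk_iff_isConj.2 (isConj_iff.2 ⟨h, rfl⟩).symm]

theorem stmt1_general (L : Type*) [Field L] [CharZero L] [FiniteDimensional ℚ L]
    [DecidableEq (L ≃ₐ[ℚ] L)]
    (d : ℕ)
    (c : Fin d → ℤ) (F : Polynomial ℤ)
    (hF : F = Polynomial.X ^ d + ∑ j : Fin d, Polynomial.C (c j) * Polynomial.X ^ (j : ℕ))
    (ξ : L) (hξ : Polynomial.aeval ξ F = 0)
    (K : ConjClasses (L ≃ₐ[ℚ] L)) [DecidablePred (· ∈ K.carrier)]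
    (a : ℕ → ℚ)
    (ha : ∀ i, a (i + d) = -∑ j : Fin d, (c j : ℚ) * a (i + (j : ℕ)))
    (hinit : ∀ i : Fin d, algebraMap ℚ L (a (i : ℕ)) =
      ∑ σ : L ≃ₐ[ℚ] L, (σ⁻¹ ξ) ^ (i : ℕ) *
        ((Matrix.of fun σ' τ' : L ≃ₐ[ℚ] L => (σ' * τ'⁻¹) ξ)⁻¹.mulVec
          (fun τ : L ≃ₐ[ℚ] L => if τ ∈ K.carrier then (1 : L) else 0)) σ) :
    ∀ i : ℕ, algebraMap ℚ L (a i) =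
      ((Matrix.of fun σ' τ' : L ≃ₐ[ℚ] L => (σ' * τ'⁻¹) ξ).det)⁻¹ *
        ∑ σ : L ≃ₐ[ℚ] L, ∑ τ : L ≃ₐ[ℚ] L,
          if τ ∈ K.carrier then
            σ (ξ ^ i) *
              MvPolynomial.aeval (fun ρ : L ≃ₐ[ℚ] L => ρ ξ) (groupDetDeriv _ (σ * τ))
          else 0 := by
  let E : LinearRecurrence L := ⟨d, -fun j => (c j : L)⟩
  let χ : (L ≃ₐ[ℚ] L) → L := fun τ => if τ ∈ K.carrier then 1 else 0
  have hroot (σ : L ≃ₐ[ℚ] L) : E.charPoly.IsRoot (σ ξ) := by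
    have hσξ := congrArg σ hξ
    simp only [hF, map_add, map_pow, map_sum, map_mul, Polynomial.aeval_X, Polynomial.aeval_C,
      map_zero] at hσξ
    simpa [E, LinearRecurrence.charPoly_mk_neg, Polynomial.eval_finsetSum] using hσξ
  have hχ (g h : L ≃ₐ[ℚ] L) : χ (h * g * h⁻¹) = χ g := by
    simp only [χ, K.mul_mul_inv_mem_carrier_iff]
  have hsol : E.IsSolution fun n => algebraMap ℚ L (a n) := fun n => by simp [E, ha]
  have hseq := (E.eq_iff_eqOn_range_order _ _ hsol
    (E.isSolution_sum_geom_mul _ _ fun σ => hroot σ⁻¹)).2 fun n hn => hinit ⟨n, mem_range.1 hn⟩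
  intro i
  rw [congrFun hseq i]
  change ∑ σ, (σ⁻¹ ξ) ^ i * ((groupMatrixOf fun ρ : L ≃ₐ[ℚ] L => ρ ξ)⁻¹ *ᵥ χ) σ =
    (groupMatrixOf fun ρ : L ≃ₐ[ℚ] L => ρ ξ).det⁻¹ * _
  rw [← Equiv.sum_comp (Equiv.inv _)]
  simp only [Equiv.inv_apply, inv_inv, inv_groupMatrixOf_mulVec_apply _ χ hχ, aeval_groupDetDeriv,
    mul_sum, map_pow]
  refine sum_congr rfl fun σ _ => sum_congr rfl fun τ _ => ?_
  simp only [χ]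
  split_ifs <;> ring

/-- Let `(a_i)_{i≥0} ∈ RS(F, ℚ)` be the sequence whose first `d` terms are the column of
`P Γ_ξ⁻¹ κ` corresponding to the conjugacy class `K` of `G = Gal(L/ℚ)`.  Then for every
`i ≥ 0`, `a_i = (1/det Γ_ξ) Σ_{σ∈G} Σ_{τ∈K} σ(ξ^i) ∂_{στ}(ξ)`. -/
theorem stmt1 (L : Type*) [Field L] [CharZero L] [FiniteDimensional ℚ L] [IsGalois ℚ L]
    [DecidableEq (L ≃ₐ[ℚ] L)]
    (d : ℕ) (hd : 0 < d) (hdeg : Module.finrank ℚ L = d)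
    (c : Fin d → ℤ) (F : Polynomial ℤ)
    (hF : F = Polynomial.X ^ d + ∑ j : Fin d, Polynomial.C (c j) * Polynomial.X ^ (j : ℕ))
    (hFirr : Irreducible (F.map (Int.castRingHom ℚ)))
    (ξ : L) (hξ : Polynomial.aeval ξ F = 0)
    (hNB : ∃ b : Module.Basis (L ≃ₐ[ℚ] L) ℚ L, ∀ σ : L ≃ₐ[ℚ] L, b σ = σ ξ)
    (K : ConjClasses (L ≃ₐ[ℚ] L)) [DecidablePred (· ∈ K.carrier)]
    (a : ℕ → ℚ)
    (ha : ∀ i, a (i + d) = -∑ j : Fin d, (c j : ℚ) * a (i + (j : ℕ)))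
    (hinit : ∀ i : Fin d, algebraMap ℚ L (a (i : ℕ)) =
      ∑ σ : L ≃ₐ[ℚ] L, (σ⁻¹ ξ) ^ (i : ℕ) *
        ((Matrix.of fun σ' τ' : L ≃ₐ[ℚ] L => (σ' * τ'⁻¹) ξ)⁻¹.mulVec
          (fun τ : L ≃ₐ[ℚ] L => if τ ∈ K.carrier then (1 : L) else 0)) σ) :
    ∀ i : ℕ, algebraMap ℚ L (a i) =
      ((Matrix.of fun σ' τ' : L ≃ₐ[ℚ] L => (σ' * τ'⁻¹) ξ).det)⁻¹ *
        ∑ σ : L ≃ₐ[ℚ] L, ∑ τ : L ≃ₐ[ℚ] L,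
          if τ ∈ K.carrier then
            σ (ξ ^ i) *
              MvPolynomial.aeval (fun ρ : L ≃ₐ[ℚ] L => ρ ξ) (groupDetDeriv _ (σ * τ))
          else 0 :=
  stmt1_general L d c F hF ξ hξ K a ha hinit
end

section
/- Let Ψ : RS(F,L) → L ⊗_ℚ L be the L-linear map sending a sequence a = (a_i)_{i≥0} to Σ_{σ∈G} z_σ ⊗ σ^{−1}ξ, where the column vector [z_σ]_{σ∈G} equals P^{−1}·(a_0, …, a_{d−1})^t. Then Ψ is G-equivariant: for every γ ∈ G and every a ∈ RS(F,L), Ψ(γ·a) = γ·Ψ(a), where G acts on RS(F,L) termwise (γ·(a_i)_i = (γ(a_i))_i) and on L ⊗_ℚ L diagonally (γ·(x ⊗ y) = γx ⊗ γy). -/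
/-!
Applying `γ` entrywise to `P` permutes its columns, because `γ` permutes the conjugates `σ⁻¹ ξ`.
Since `ξ` has degree `[L : ℚ]`, these conjugates are distinct, so the Vandermonde matrix `P` is
invertible; hence the coefficient vector of `γ • a` is `γ` applied to that of `a`, with the same
permutation of the indices, and reindexing the sum defining `Ψ` gives equivariance.
-/

open Polynomial Module
open scoped TensorProduct Matrix

theorem Polynomial.natDegree_X_pow_add_sum_fin {R : Type*} [CommRing R] [Nontrivial R]
    (d : ℕ) (c : Fin d → R) : (X ^ d + ∑ j : Fin d, C (c j) * X ^ (j : ℕ)).natDegree = d := by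
  rw [natDegree_add_eq_left_of_degree_lt (by simpa using degree_sum_fin_lt c), natDegree_X_pow]

theorem Polynomial.monic_X_pow_add_sum_fin {R : Type*} [CommRing R]
    (d : ℕ) (c : Fin d → R) : (X ^ d + ∑ j : Fin d, C (c j) * X ^ (j : ℕ)).Monic :=
  monic_X_pow_add (degree_sum_fin_lt c)

theorem minpoly_rat_eq_map_of_irreducible {L : Type*} [Field L] [CharZero L] {F : ℤ[X]}
    (hmonic : F.Monic) (hirr : Irreducible (F.map (Int.castRingHom ℚ))) {ξ : L}
    (hξ : aeval ξ F = 0) : minpoly ℚ ξ = F.map (Int.castRingHom ℚ) :=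
  (minpoly.eq_of_irreducible_of_monic hirr (by rwa [← algebraMap_int_eq, aeval_map_algebraMap])
    (hmonic.map _)).symm

theorem AlgEquiv.apply_injective_of_natDegree_minpoly_eq_finrank {K L : Type*} [Field K]
    [Field L] [Algebra K L] [FiniteDimensional K L] {ξ : L}
    (h : (minpoly K ξ).natDegree = finrank K L) :
    Function.Injective fun σ : L ≃ₐ[K] L => σ ξ := by
  have htop : IntermediateField.adjoin K {ξ} = ⊤ :=
    IntermediateField.eq_of_le_of_finrank_eq le_top (by
      rw [IntermediateField.adjoin.finrank (.of_finite K ξ), IntermediateField.finrank_top', h])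
  have hgen : Algebra.adjoin K {ξ} = ⊤ := Algebra.adjoin_eq_top_of_primitive_element
    (Algebra.IsAlgebraic.isAlgebraic ξ) htop
  intro σ τ hστ
  exact AlgEquiv.coe_toAlgHom_injective <| AlgHom.ext_of_adjoin_eq_top hgen <| by simpa using hστ

theorem Matrix.inv_mulVec_comp_of_apply_perm_col {n R G : Type*} [Fintype n] [DecidableEq n]
    [CommRing R] [FunLike G R R] [RingHomClass G R R] (γ : G) (π : Equiv.Perm n)
    {P : Matrix n n R} (hP : IsUnit P.det)
    (hγP : ∀ i k, P i (π k) = γ (P i k)) (v : n → R) :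
    P⁻¹ *ᵥ (γ ∘ v) = fun m => γ ((P⁻¹ *ᵥ v) (π.symm m)) := by
  set z := P⁻¹ *ᵥ v
  suffices P *ᵥ (fun m => γ (z (π.symm m))) = γ ∘ v by
    rw [← this, mulVec_mulVec, nonsing_inv_mul _ hP, one_mulVec]
  have hz : P *ᵥ z = v := by rw [mulVec_mulVec, mul_nonsing_inv _ hP, one_mulVec]
  funext i
  simp only [mulVec, dotProduct, Function.comp_apply, ← hz]
  rw [← Equiv.sum_comp π, map_sum]
  simp [hγP]

theorem stmt6_general (L : Type*) [Field L] [CharZero L] [FiniteDimensional ℚ L]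
    (d : ℕ) (hdeg : Module.finrank ℚ L = d)
    (c : Fin d → ℤ) (F : Polynomial ℤ)
    (hF : F = Polynomial.X ^ d + ∑ j : Fin d, Polynomial.C (c j) * Polynomial.X ^ (j : ℕ))
    (hFirr : Irreducible (F.map (Int.castRingHom ℚ)))
    (ξ : L) (hξ : Polynomial.aeval ξ F = 0)
    (ι : Fin d ≃ (L ≃ₐ[ℚ] L))
    (P : Matrix (Fin d) (Fin d) L)
    (hP : P = Matrix.of fun i j : Fin d => ((ι j)⁻¹ ξ) ^ (i : ℕ))
    (Ψ : (ℕ → L) → L ⊗[ℚ] L)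
    (hΨ : ∀ a : ℕ → L,
      Ψ a = ∑ k : Fin d, (P⁻¹.mulVec fun i : Fin d => a (i : ℕ)) k ⊗ₜ[ℚ] ((ι k)⁻¹ ξ)) :
    ∀ γ : L ≃ₐ[ℚ] L, ∀ a : ℕ → L,
      (∀ i, a (i + d) = -∑ j : Fin d, (c j : L) * a (i + (j : ℕ))) →
      Ψ (fun i => γ (a i)) =
        TensorProduct.map γ.toLinearMap γ.toLinearMap (Ψ a) := by
  intro γ a _
  have hFmonic : F.Monic := hF ▸ monic_X_pow_add_sum_fin d c
  have hmin : (minpoly ℚ ξ).natDegree = finrank ℚ L := by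
    rw [minpoly_rat_eq_map_of_irreducible hFmonic hFirr hξ, hFmonic.natDegree_map, hF,
      natDegree_X_pow_add_sum_fin, hdeg]
  have hconj : Function.Injective fun k => (ι k)⁻¹ ξ :=
    (AlgEquiv.apply_injective_of_natDegree_minpoly_eq_finrank hmin).comp
      (inv_injective.comp ι.injective)
  have hPdet : IsUnit P.det := by
    rw [isUnit_iff_ne_zero, show P = (Matrix.vandermonde fun k => (ι k)⁻¹ ξ)ᵀ from hP,
      Matrix.det_transpose]
    exact Matrix.det_vandermonde_ne_zero_iff.mpr hconj
  let π : Equiv.Perm (Fin d) := ι.trans ((Equiv.mulRight γ⁻¹).trans ι.symm)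
  have hπ : ∀ k, (ι (π k))⁻¹ ξ = γ ((ι k)⁻¹ ξ) := fun k => by
    simp only [π, Equiv.trans_apply, Equiv.apply_symm_apply, Equiv.coe_mulRight, mul_inv_rev,
      inv_inv]
    rfl
  rw [hΨ, hΨ, show (fun i : Fin d => γ (a i)) = γ ∘ fun i : Fin d => a i from rfl,
    Matrix.inv_mulVec_comp_of_apply_perm_col γ π hPdet
      (fun i k => by rw [hP, Matrix.of_apply, Matrix.of_apply, hπ, map_pow]),
    map_sum, ← Equiv.sum_comp π]
  simp only [Equiv.symm_apply_apply, hπ, TensorProduct.map_tmul]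
  rfl

/-- The `L`-linear map `Ψ : RS(F,L) → L ⊗_ℚ L`, `a ↦ Σ_σ z_σ ⊗ σ⁻¹ξ` where
`(z_σ)_σ = P⁻¹ (a₀, …, a_{d-1})ᵗ`, is `G`-equivariant for the termwise `G`-action on
sequences and the diagonal `G`-action on `L ⊗_ℚ L`.  Here the index set `G = Gal(L/ℚ)`
is identified with `Fin d` via a bijection `ι`. -/
theorem stmt6 (L : Type*) [Field L] [CharZero L] [FiniteDimensional ℚ L] [IsGalois ℚ L]
    (d : ℕ) (hd : 0 < d) (hdeg : Module.finrank ℚ L = d)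
    (c : Fin d → ℤ) (F : Polynomial ℤ)
    (hF : F = Polynomial.X ^ d + ∑ j : Fin d, Polynomial.C (c j) * Polynomial.X ^ (j : ℕ))
    (hFirr : Irreducible (F.map (Int.castRingHom ℚ)))
    (ξ : L) (hξ : Polynomial.aeval ξ F = 0)
    (ι : Fin d ≃ (L ≃ₐ[ℚ] L))
    (P : Matrix (Fin d) (Fin d) L)
    (hP : P = Matrix.of fun i j : Fin d => ((ι j)⁻¹ ξ) ^ (i : ℕ))
    (Ψ : (ℕ → L) → L ⊗[ℚ] L)
    (hΨ : ∀ a : ℕ → L,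
      Ψ a = ∑ k : Fin d, (P⁻¹.mulVec fun i : Fin d => a (i : ℕ)) k ⊗ₜ[ℚ] ((ι k)⁻¹ ξ)) :
    ∀ γ : L ≃ₐ[ℚ] L, ∀ a : ℕ → L,
      (∀ i, a (i + d) = -∑ j : Fin d, (c j : L) * a (i + (j : ℕ))) →
      Ψ (fun i => γ (a i)) =
        TensorProduct.map γ.toLinearMap γ.toLinearMap (Ψ a) :=
  stmt6_general L d hdeg c F hF hFirr ξ hξ ι P hP Ψ hΨ
end

section
/- For α ∈ L, let φ_α : G → L be the function σ ↦ σ(α). Then the matrix Γ_ξ = [στ^{−1}ξ]_{σ,τ∈G} is invertible, and the family (φ_{σ^{−1}ξ})_{σ∈G} is an L-basis of the L-vector space X(G,L) of all functions from G to L. -/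
/-!
Row `σ` of `Γ_ξ` lists the values of `σ` on the basis `(τ⁻¹ξ)_τ`. Since a `ℚ`-linear map is
determined by its values on a basis, an `L`-linear relation among the rows is an `L`-linear
relation among the automorphisms of `L`, hence trivial by Dedekind's independence of
characters. So `Γ_ξ` is invertible, and its columns, which are the functions `φ_{σ⁻¹ξ}`, form
`d = dim_L X(G, L)` linearly independent vectors.
-/

theorem Module.Basis.linearIndependent_algHom_apply {K A L ι : Type*} [CommSemiring K]
    [Semiring A] [Algebra K A] [CommRing L] [IsDomain L] [Algebra K L] (b : Basis ι K A) :
    LinearIndependent L (fun f : A →ₐ[K] L => fun i => f (b i)) :=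
  (linearIndependent_toLinearMap K A L).map' (b.constr L).symm.toLinearMap
    (b.constr L).symm.ker

theorem Module.Basis.linearIndependent_algEquiv_apply {K L ι : Type*} [CommSemiring K]
    [Field L] [Algebra K L] (b : Basis ι K L) :
    LinearIndependent L (fun σ : L ≃ₐ[K] L => fun i => σ (b i)) :=
  b.linearIndependent_algHom_apply.comp AlgEquiv.toAlgHom fun _ _ h => AlgEquiv.ext
    (AlgHom.ext_iff.mp h)

theorem stmt9_general (L : Type*) [Field L] [CharZero L] [FiniteDimensional ℚ L]
    [DecidableEq (L ≃ₐ[ℚ] L)]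
    (ξ : L)
    (hNB : ∃ b : Module.Basis (L ≃ₐ[ℚ] L) ℚ L, ∀ σ : L ≃ₐ[ℚ] L, b σ = σ ξ) :
    IsUnit (Matrix.of fun σ τ : L ≃ₐ[ℚ] L => (σ * τ⁻¹) ξ).det ∧
      LinearIndependent L
        (fun σ : L ≃ₐ[ℚ] L => (fun τ : L ≃ₐ[ℚ] L => τ (σ⁻¹ ξ))) ∧
      Submodule.span L
          (Set.range fun σ : L ≃ₐ[ℚ] L => (fun τ : L ≃ₐ[ℚ] L => τ (σ⁻¹ ξ))) = ⊤ := by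
  obtain ⟨b, hb⟩ := hNB
  set Γ : Matrix (L ≃ₐ[ℚ] L) (L ≃ₐ[ℚ] L) L := Matrix.of fun σ τ => (σ * τ⁻¹) ξ
  have hrows : LinearIndependent L Γ.row := by
    convert (b.reindex (Equiv.inv (L ≃ₐ[ℚ] L))).linearIndependent_algEquiv_apply
      using 3 with σ τ
    rw [Module.Basis.reindex_apply, hb]
    rfl
  have hΓ : IsUnit Γ := Matrix.linearIndependent_rows_iff_isUnit.mp hrows
  have hcols : LinearIndependent L Γ.col := Matrix.linearIndependent_cols_iff_isUnit.mpr hΓ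
  refine ⟨(Matrix.isUnit_iff_isUnit_det Γ).mp hΓ, hcols, ?_⟩
  exact hcols.span_eq_top_of_card_eq_finrank' (by simp)

/-- If `ξ` generates a normal basis of the finite Galois extension `L/ℚ` with group
`G = Gal(L/ℚ)`, then the matrix `Γ_ξ = [στ⁻¹ξ]` is invertible and the family of functions
`φ_{σ⁻¹ξ} : τ ↦ τ(σ⁻¹ξ)` is an `L`-basis of the space `X(G, L)` of all functions `G → L`. -/
theorem stmt9 (L : Type*) [Field L] [CharZero L] [FiniteDimensional ℚ L] [IsGalois ℚ L]
    [DecidableEq (L ≃ₐ[ℚ] L)]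
    (ξ : L)
    (hNB : ∃ b : Module.Basis (L ≃ₐ[ℚ] L) ℚ L, ∀ σ : L ≃ₐ[ℚ] L, b σ = σ ξ) :
    IsUnit (Matrix.of fun σ τ : L ≃ₐ[ℚ] L => (σ * τ⁻¹) ξ).det ∧
      LinearIndependent L
        (fun σ : L ≃ₐ[ℚ] L => (fun τ : L ≃ₐ[ℚ] L => τ (σ⁻¹ ξ))) ∧
      Submodule.span L
          (Set.range fun σ : L ≃ₐ[ℚ] L => (fun τ : L ≃ₐ[ℚ] L => τ (σ⁻¹ ξ))) = ⊤ :=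
  stmt9_general L ξ hNB
end

section
/- Fix an embedding of L into ℂ and let E ⊆ ℂ be the compositum of L with the field ℚ_χ generated by the values of the irreducible characters of G. Let C' = [ψ(ρ_i)] be the r×r matrix with rows indexed by the conjugacy class representatives ρ_1, …, ρ_r and columns by ψ ∈ Irr(G). Then, in the E-vector space of functions G → E, the row vector of irreducible characters satisfies (ψ)_{ψ∈Irr(G)} = (φ_{σ^{−1}ξ})_{σ∈G} · Γ_ξ^{−1} · κ · C'; explicitly, for every ψ ∈ Irr(G) and every τ ∈ G, ψ(τ) = Σ_{σ∈G} (Γ_ξ^{−1} κ C')_{σ,ψ} · τσ^{−1}ξ. -/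
/-!
The matrix `Γ_ξ = [emb (σ τ⁻¹ ξ)]` is the transpose of the embeddings matrix of the basis
`τ ↦ τ⁻¹ ξ`, so its squared determinant is the nonzero discriminant of `L/ℚ` and `Γ_ξ` is
invertible. Row `τ` of `Γ_ξ` against column `ψ` of `Γ_ξ⁻¹ κ C'` therefore gives `(κ C')_{τ,ψ}`,
which is `ψ(ρ_j)` for the unique `j` with `τ ∈ K_j`, i.e. `ψ(τ)` because characters are class
functions.
-/

open scoped BigOperators

/-- `f : G → ℂ` is an irreducible character of `G` if it is the character of some
simple (= irreducible) finite-dimensional complex representation of `G`. -/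
def IsIrrChar (G : Type) [Group G] (f : G → ℂ) : Prop :=
  ∃ V : FDRep ℂ G, CategoryTheory.Simple V ∧ f = fun g => FDRep.character V g

lemma IsIrrChar.apply_eq_of_isConj {G : Type} [Group G] {f : G → ℂ} (hf : IsIrrChar G f)
    {x y : G} (h : IsConj x y) : f x = f y := by
  obtain ⟨V, -, rfl⟩ := hf
  obtain ⟨c, hc⟩ := isConj_iff.mp h
  simpa using (FDRep.char_conj V x c).symm.trans (congrArg V.character hc)

lemma sum_ite_isConj_mul_apply {G R ι : Type*} [Group G] [Semiring R] [Fintype ι]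
    [∀ x y : G, Decidable (IsConj x y)] (ρ : ι → G) (hρ : ∀ g, ∃! j, IsConj (ρ j) g)
    (f : G → R) (hf : ∀ x y, IsConj x y → f x = f y) (g : G) :
    ∑ j, (if IsConj (ρ j) g then (1 : R) else 0) * f (ρ j) = f g := by
  obtain ⟨j₀, hj₀, huniq⟩ := hρ g
  rw [Fintype.sum_eq_single j₀ fun j hj => by rw [if_neg fun h => hj (huniq j h), zero_mul],
    if_pos hj₀, one_mul, hf _ _ hj₀]

lemma Matrix.sum_inv_of_mul_apply_mul {n p R : Type*} [Fintype n] [DecidableEq n]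
    [CommRing R] (f : n → n → R) (h : IsUnit (Matrix.of f).det) (A : Matrix n p R) (τ : n)
    (i : p) : ∑ σ, ((Matrix.of f)⁻¹ * A) σ i * f τ σ = A τ i := by
  calc ∑ σ, ((Matrix.of f)⁻¹ * A) σ i * f τ σ = (Matrix.of f * ((Matrix.of f)⁻¹ * A)) τ i := by
        simp only [Matrix.mul_apply, Matrix.of_apply, mul_comm]
    _ = A τ i := by rw [← Matrix.mul_assoc, Matrix.mul_nonsing_inv _ h, Matrix.one_mul]

section NormalBasis

variable {K L E : Type*} [Field K] [Field L] [Field E] [Algebra K L] [Algebra K E]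
  [FiniteDimensional K L] [IsGalois K L] [IsAlgClosed E]

noncomputable def AlgHom.galEquivEmbeddings (emb : L →ₐ[K] E) :
    (L ≃ₐ[K] L) ≃ (L →ₐ[K] E) :=
  Equiv.ofBijective (fun σ => emb.comp σ.toAlgHom) <| by
    refine (Fintype.bijective_iff_injective_and_card _).mpr ⟨fun σ σ' h => ?_, ?_⟩
    · ext x
      exact emb.injective (DFunLike.congr_fun h x)
    · rw [AlgHom.card K L E, ← Nat.card_eq_fintype_card, IsGalois.card_aut_eq_finrank]

theorem isUnit_det_normalBasisMatrix [DecidableEq (L ≃ₐ[K] L)] (emb : L →ₐ[K] E) {ξ : L}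
    (b : Module.Basis (L ≃ₐ[K] L) K L) (hb : ∀ σ, b σ = σ ξ) :
    IsUnit (Matrix.of fun σ τ : L ≃ₐ[K] L => emb ((σ * τ⁻¹) ξ)).det := by
  let b' := b.reindex (Equiv.inv (L ≃ₐ[K] L))
  have hΓ : (Matrix.of fun σ τ : L ≃ₐ[K] L => emb ((σ * τ⁻¹) ξ)) =
      (Algebra.embeddingsMatrixReindex K E b' emb.galEquivEmbeddings).transpose := by
    ext σ τ
    simp [b', hb, Algebra.embeddingsMatrixReindex, AlgHom.galEquivEmbeddings]
  have hdiscr := Algebra.discr_eq_det_embeddingsMatrixReindex_pow_two K E b'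
    emb.galEquivEmbeddings
  rw [hΓ, Matrix.det_transpose, isUnit_iff_ne_zero]
  intro h0
  rw [h0, zero_pow two_ne_zero, map_eq_zero_iff _ (algebraMap K E).injective] at hdiscr
  exact Algebra.discr_not_zero_of_basis K b' hdiscr

end NormalBasis

/-- Fix an embedding `emb : L → ℂ`.  The row vector of irreducible characters of
`G = Gal(L/ℚ)` satisfies `(ψ)_ψ = (φ_{σ⁻¹ξ})_σ · Γ_ξ⁻¹ · κ · C'`; explicitly, for every
irreducible character `ψ` and every `τ ∈ G`,
`ψ(τ) = Σ_σ (Γ_ξ⁻¹ κ C')_{σ,ψ} · τσ⁻¹ξ`.  Here `ξ` generates a normal basis of `L/ℚ`,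
`Γ_ξ = [στ⁻¹ξ]`, `κ` is the incidence matrix of the conjugacy classes `K_j` (with
representatives `ρ j`), and `C' = [ψ(ρ_j)]`. -/
theorem stmt10 (L : Type) [Field L] [CharZero L] [FiniteDimensional ℚ L] [IsGalois ℚ L]
    [DecidableEq (L ≃ₐ[ℚ] L)]
    [∀ x y : L ≃ₐ[ℚ] L, Decidable (IsConj x y)]
    (ξ : L)
    (hNB : ∃ b : Module.Basis (L ≃ₐ[ℚ] L) ℚ L, ∀ σ : L ≃ₐ[ℚ] L, b σ = σ ξ)
    (emb : L →+* ℂ)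
    (r : ℕ) (ρ : Fin r → (L ≃ₐ[ℚ] L))
    (hρ : ∀ g : L ≃ₐ[ℚ] L, ∃! j : Fin r, IsConj (ρ j) g)
    (ι : Type) [Fintype ι] (ψ : ι → (L ≃ₐ[ℚ] L) → ℂ)
    (hirr : ∀ i, IsIrrChar (L ≃ₐ[ℚ] L) (ψ i))
    (hinj : Function.Injective ψ)
    (hall : ∀ f : (L ≃ₐ[ℚ] L) → ℂ, IsIrrChar (L ≃ₐ[ℚ] L) f → ∃ i, ψ i = f) :
    ∀ i : ι, ∀ τ : L ≃ₐ[ℚ] L,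
      ψ i τ =
        ∑ σ : L ≃ₐ[ℚ] L,
          (((Matrix.of fun σ' τ' : L ≃ₐ[ℚ] L => emb ((σ' * τ'⁻¹) ξ))⁻¹ *
              (Matrix.of fun (g : L ≃ₐ[ℚ] L) (j : Fin r) =>
                if IsConj (ρ j) g then (1 : ℂ) else 0) *
              (Matrix.of fun (j : Fin r) (i' : ι) => ψ i' (ρ j))) σ i) *
            emb ((τ * σ⁻¹) ξ) := by
  intro i τ
  obtain ⟨b, hb⟩ := hNB
  have hΓ : IsUnit (Matrix.of fun σ τ : L ≃ₐ[ℚ] L => emb ((σ * τ⁻¹) ξ)).det :=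
    isUnit_det_normalBasisMatrix emb.toRatAlgHom b hb
  rw [Matrix.mul_assoc, Matrix.sum_inv_of_mul_apply_mul _ hΓ, Matrix.mul_apply]
  exact (sum_ite_isConj_mul_apply ρ hρ (ψ i) (fun _ _ => (hirr i).apply_eq_of_isConj) τ).symm
end

section
/- Let K be a conjugacy class of G, let a = (a_i)_{i≥0} ∈ RS(F,ℚ), and define [z_σ]_{σ∈G} = P^{−1}·(a_0,…,a_{d−1})^t ∈ L^d. Assume that for every τ ∈ G one has Σ_{σ∈G} z_σ · τ(σ^{−1}ξ) = 1 if τ ∈ K and = 0 if τ ∉ K. Let p be a prime number unramified in L, let 𝔭 be a prime ideal of the ring of integers of L lying above p, and let Frob_𝔭 ∈ G be the Frobenius automorphism of 𝔭 (so Frob_𝔭(x) ≡ x^p (mod 𝔭) for every 𝔭-integral x). Assume moreover that each z_σ is 𝔭-integral and each a_i is p-integral. Then a_p ≡ 1 (mod p) if Frob_𝔭 ∈ K, and a_p ≡ 0 (mod p) otherwise. -/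
open scoped BigOperators

/-- An element `z` of a number field `L` is `𝔭`-integral: `z = x/s` with `x, s`
algebraic integers and `s ∉ 𝔭`. -/
def IsPIntegral (L : Type*) [Field L] [CharZero L]
    (𝔭 : Ideal (NumberField.RingOfIntegers L)) (z : L) : Prop :=
  ∃ x s : NumberField.RingOfIntegers L, s ∉ 𝔭 ∧
    z * algebraMap (NumberField.RingOfIntegers L) L s =
      algebraMap (NumberField.RingOfIntegers L) L x

/-!
Each conjugate `σ⁻¹ ξ` is a root of `F`, so the sequence `i ↦ ∑_σ z_σ (σ⁻¹ ξ)^i` satisfies the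
recurrence of `a`; having the same first `d` terms, it equals `a`. Hence
`a_p - [Frob ∈ K] = ∑_σ z_σ ((σ⁻¹ ξ)^p - Frob (σ⁻¹ ξ))`, a sum of `𝔭`-integral multiples of
elements of `𝔭`. A rational number in `𝔭 𝓞_𝔭` with denominator prime to `p` is `≡ 0 (mod p)`,
because `𝔭 ∩ ℤ = pℤ`.
-/

open Polynomial NumberField

theorem LinearRecurrence.charPoly_mk_neg_s12 {R : Type*} [CommRing R] {d : ℕ} (c : Fin d → R) :
    (LinearRecurrence.mk d (-c)).charPoly = X ^ d + ∑ j, C (c j) * X ^ (j : ℕ) := by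
  simp [charPoly, ← C_mul_X_pow_eq_monomial, sub_eq_add_neg]

theorem LinearRecurrence.IsSolution.eq_sum_mul_pow {R ι : Type*} [CommRing R] [Fintype ι]
    {E : LinearRecurrence R} {u : ℕ → R} (hu : E.IsSolution u) (w r : ι → R)
    (hr : ∀ k, E.charPoly.IsRoot (r k)) (hinit : ∀ i < E.order, u i = ∑ k, w k * r k ^ i)
    (n : ℕ) : u n = ∑ k, w k * r k ^ n := by
  have hgeom k : (fun n => r k ^ n) ∈ E.solSpace :=
    (E.is_sol_iff_mem_solSpace _).1 ((E.geom_sol_iff_root_charPoly (r k)).2 (hr k))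
  have hsum : E.IsSolution fun n => ∑ k, w k * r k ^ n := by
    convert (E.is_sol_iff_mem_solSpace _).2 (E.solSpace.sum_mem (t := Finset.univ)
      fun k _ => E.solSpace.smul_mem (w k) (hgeom k)) using 2
    simp
  exact congrFun ((E.eq_iff_eqOn_range_order u _ hu hsum).2
    fun i hi => hinit i (Finset.mem_range.1 hi)) n

theorem eq_sum_mul_pow_of_recurrence {R ι : Type*} [CommRing R] [Fintype ι] {d : ℕ}
    {c : Fin d → ℤ} {F : ℤ[X]} (hF : F = X ^ d + ∑ j, C (c j) * X ^ (j : ℕ)) {u : ℕ → R}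
    (hu : ∀ i, u (i + d) = -∑ j, (c j : R) * u (i + j)) (w r : ι → R)
    (hr : ∀ k, aeval (r k) F = 0) (hinit : ∀ i < d, u i = ∑ k, w k * r k ^ i) (n : ℕ) :
    u n = ∑ k, w k * r k ^ n := by
  let E : LinearRecurrence R := ⟨d, -fun j => (c j : R)⟩
  have hFE : F.map (algebraMap ℤ R) = E.charPoly := by
    simp [E, hF, LinearRecurrence.charPoly_mk_neg_s12, Polynomial.map_sum]
  refine LinearRecurrence.IsSolution.eq_sum_mul_pow (E := E) (fun i => ?_) w r (fun k => ?_)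
    hinit n
  · simp [E, hu]
  · rw [← hFE, IsRoot, eval_map_algebraMap, hr k]

theorem Ideal.intCast_mem_iff_dvd {R : Type*} [CommRing R] {I : Ideal R} (hI : I ≠ ⊤) {p : ℕ}
    (hp : p.Prime) (hpI : (p : R) ∈ I) (k : ℤ) : (k : R) ∈ I ↔ (p : ℤ) ∣ k := by
  have : Fact p.Prime := ⟨hp⟩
  have hle : Ideal.span {(p : ℤ)} ≤ Ideal.under ℤ I := by
    rw [Ideal.span_singleton_le_iff_mem, Ideal.under_def, Ideal.mem_comap]
    simpa using hpI
  rw [← Ideal.mem_span_singleton, (Int.ideal_span_isMaximal_of_prime p).eq_of_le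
    (Ideal.comap_ne_top _ hI) hle, Ideal.mem_comap, eq_intCast]

section LocalizedPrime

variable {L : Type*} [Field L]

def MemLocalizedPrime (𝔭 : Ideal (𝓞 L)) (z : L) : Prop :=
  ∃ x s : 𝓞 L, x ∈ 𝔭 ∧ s ∉ 𝔭 ∧ z * algebraMap (𝓞 L) L s = algebraMap (𝓞 L) L x

variable {𝔭 : Ideal (𝓞 L)} [𝔭.IsPrime]

theorem memLocalizedPrime_algebraMap {x : 𝓞 L} (hx : x ∈ 𝔭) :
    MemLocalizedPrime 𝔭 (algebraMap (𝓞 L) L x) :=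
  ⟨x, 1, hx, Ideal.IsPrime.one_notMem ‹_›, by simp⟩

theorem memLocalizedPrime_zero : MemLocalizedPrime 𝔭 (0 : L) := by
  simpa using memLocalizedPrime_algebraMap (Ideal.zero_mem 𝔭)

theorem MemLocalizedPrime.add {z w : L} (hz : MemLocalizedPrime 𝔭 z)
    (hw : MemLocalizedPrime 𝔭 w) : MemLocalizedPrime 𝔭 (z + w) := by
  obtain ⟨x, s, hx, hs, hzs⟩ := hz
  obtain ⟨y, t, hy, ht, hwt⟩ := hw
  refine ⟨x * t + y * s, s * t, Ideal.add_mem _ (Ideal.mul_mem_right _ _ hx)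
    (Ideal.mul_mem_right _ _ hy), Ideal.IsPrime.mul_notMem ‹_› hs ht, ?_⟩
  simp only [map_add, map_mul, ← hzs, ← hwt]
  ring

theorem memLocalizedPrime_sum {ι : Type*} (t : Finset ι) {f : ι → L}
    (hf : ∀ i ∈ t, MemLocalizedPrime 𝔭 (f i)) : MemLocalizedPrime 𝔭 (∑ i ∈ t, f i) :=
  Finset.sum_induction f _ (fun _ _ => MemLocalizedPrime.add) memLocalizedPrime_zero hf

theorem IsPIntegral.mul_memLocalizedPrime [CharZero L] {z w : L} (hz : IsPIntegral L 𝔭 z)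
    (hw : MemLocalizedPrime 𝔭 w) : MemLocalizedPrime 𝔭 (z * w) := by
  obtain ⟨x, s, hs, hzs⟩ := hz
  obtain ⟨y, t, hy, ht, hwt⟩ := hw
  refine ⟨x * y, s * t, Ideal.mul_mem_left _ _ hy, Ideal.IsPrime.mul_notMem ‹_› hs ht, ?_⟩
  simp only [map_mul, ← hzs, ← hwt]
  ring

theorem isPIntegral_intCast [CharZero L] (k : ℤ) : IsPIntegral L 𝔭 k :=
  ⟨k, 1, Ideal.IsPrime.one_notMem ‹_›, by simp⟩

theorem intCast_mem_of_memLocalizedPrime {k : ℤ} (hk : MemLocalizedPrime 𝔭 (k : L)) :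
    (k : 𝓞 L) ∈ 𝔭 := by
  obtain ⟨x, s, hx, hs, hks⟩ := hk
  have hkx : (k : 𝓞 L) * s = x :=
    FaithfulSMul.algebraMap_injective (𝓞 L) L (by simpa using hks)
  exact (Ideal.IsPrime.mem_or_mem ‹_› (hkx ▸ hx)).resolve_right hs

theorem ratModEq_of_memLocalizedPrime [CharZero L] {p : ℕ} (hp : p.Prime)
    (hp𝔭 : (p : 𝓞 L) ∈ 𝔭) {x : ℚ} (hx : ∃ m n : ℤ, ¬ (p : ℤ) ∣ n ∧ x * n = m) (k : ℤ)
    (h : MemLocalizedPrime 𝔭 (algebraMap ℚ L (x - k))) : RatModEq p x k := by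
  obtain ⟨m, n, hn, hxn⟩ := hx
  have hxnL : (x : L) * n = m := by exact_mod_cast congrArg (Rat.cast : ℚ → L) hxn
  have hcast : ((m - k * n : ℤ) : L) = n * algebraMap ℚ L (x - k) := by
    rw [eq_ratCast]
    push_cast
    linear_combination -hxnL
  have hmem := intCast_mem_of_memLocalizedPrime
    (hcast ▸ (isPIntegral_intCast n).mul_memLocalizedPrime h)
  obtain ⟨q, hq⟩ := (Ideal.intCast_mem_iff_dvd (Ideal.IsPrime.ne_top ‹_›) hp hp𝔭 _).1 hmem
  refine ⟨q, n, hn, ?_⟩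
  rw [sub_mul, hxn]
  exact_mod_cast hq

theorem memLocalizedPrime_pow_sub_of_frob [CharZero L] {p : ℕ} {Frob : L ≃ₐ[ℚ] L}
    (hFrob : ∀ x y : 𝓞 L, algebraMap (𝓞 L) L y = Frob (algebraMap (𝓞 L) L x) → y - x ^ p ∈ 𝔭)
    {w : L} (hw : IsIntegral ℤ w) : MemLocalizedPrime 𝔭 (w ^ p - Frob w) := by
  let x : 𝓞 L := ⟨w, hw⟩
  let y : 𝓞 L := ⟨Frob w, map_isIntegral_int Frob hw⟩
  have hxy : x ^ p - y ∈ 𝔭 := by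
    simpa using 𝔭.neg_mem_iff.2 (hFrob x y rfl)
  convert memLocalizedPrime_algebraMap hxy using 1
  rw [map_sub, map_pow]
  rfl

end LocalizedPrime

theorem stmt12_general (L : Type*) [Field L] [CharZero L] [FiniteDimensional ℚ L]
    (d : ℕ)
    (c : Fin d → ℤ) (F : Polynomial ℤ)
    (hF : F = Polynomial.X ^ d + ∑ j : Fin d, Polynomial.C (c j) * Polynomial.X ^ (j : ℕ))
    (ξ : L) (hξ : Polynomial.aeval ξ F = 0)
    (K : ConjClasses (L ≃ₐ[ℚ] L)) [DecidablePred (· ∈ K.carrier)]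
    (a : ℕ → ℚ)
    (ha : ∀ i, a (i + d) = -∑ j : Fin d, (c j : ℚ) * a (i + (j : ℕ)))
    (z : (L ≃ₐ[ℚ] L) → L)
    (hz : ∀ i : Fin d, algebraMap ℚ L (a (i : ℕ)) =
      ∑ σ : L ≃ₐ[ℚ] L, z σ * (σ⁻¹ ξ) ^ (i : ℕ))
    (hK : ∀ τ : L ≃ₐ[ℚ] L,
      (∑ σ : L ≃ₐ[ℚ] L, z σ * τ (σ⁻¹ ξ)) = if τ ∈ K.carrier then 1 else 0)
    (p : ℕ) (hp : p.Prime)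
    (𝔭 : Ideal (NumberField.RingOfIntegers L)) (h𝔭 : 𝔭.IsMaximal)
    (hp𝔭 : (p : NumberField.RingOfIntegers L) ∈ 𝔭)
    (Frob : L ≃ₐ[ℚ] L)
    (hFrob : ∀ x y : NumberField.RingOfIntegers L,
      algebraMap (NumberField.RingOfIntegers L) L y =
        Frob (algebraMap (NumberField.RingOfIntegers L) L x) →
      y - x ^ p ∈ 𝔭)
    (hzint : ∀ σ : L ≃ₐ[ℚ] L, IsPIntegral L 𝔭 (z σ))
    (haint : ∀ i : ℕ, ∃ m n : ℤ, ¬ (p : ℤ) ∣ n ∧ a i * (n : ℚ) = (m : ℚ)) :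
    (Frob ∈ K.carrier → RatModEq p (a p) 1) ∧
      (Frob ∉ K.carrier → RatModEq p (a p) 0) := by
  have : 𝔭.IsPrime := h𝔭.isPrime
  have hFmonic : F.Monic := by
    rw [hF, ← LinearRecurrence.charPoly_mk_neg_s12]
    exact LinearRecurrence.charPoly_monic _
  have hint (σ : L ≃ₐ[ℚ] L) : IsIntegral ℤ (σ⁻¹ ξ) := map_isIntegral_int σ⁻¹ ⟨F, hFmonic, hξ⟩
  have hroot (σ : L ≃ₐ[ℚ] L) : aeval (σ⁻¹ ξ) F = 0 := by
    simpa [hξ] using aeval_algHom_apply (((σ⁻¹ : L ≃ₐ[ℚ] L) : L →ₐ[ℚ] L).restrictScalars ℤ) ξ F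
  have hpow := eq_sum_mul_pow_of_recurrence hF (u := fun i => algebraMap ℚ L (a i))
    (fun i => by simp [ha]) z (fun σ => σ⁻¹ ξ) hroot (fun i hi => hz ⟨i, hi⟩) p
  have hdiff : algebraMap ℚ L (a p - (if Frob ∈ K.carrier then 1 else 0 : ℤ)) =
      ∑ σ, z σ * ((σ⁻¹ ξ) ^ p - Frob (σ⁻¹ ξ)) := by
    rw [map_sub, hpow, eq_ratCast, Rat.cast_intCast, Int.cast_ite, Int.cast_one, Int.cast_zero,
      ← hK Frob, ← Finset.sum_sub_distrib]
    simp only [mul_sub]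
  have hcong : RatModEq p (a p) (if Frob ∈ K.carrier then 1 else 0 : ℤ) :=
    ratModEq_of_memLocalizedPrime hp hp𝔭 (haint p) _ <| hdiff ▸ memLocalizedPrime_sum _
      fun σ _ => (hzint σ).mul_memLocalizedPrime (memLocalizedPrime_pow_sub_of_frob hFrob (hint σ))
  constructor <;> intro hFrobK <;> simpa [hFrobK] using hcong

/-- Let `K` be a conjugacy class of `G = Gal(L/ℚ)`, let `(a_i)_{i≥0} ∈ RS(F,ℚ)`, and let
`(z_σ)_{σ∈G} = P⁻¹ (a₀,…,a_{d-1})ᵗ` (expressed as `Σ_σ z_σ (σ⁻¹ξ)^i = a_i` for `i < d`).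
Assume `Σ_σ z_σ · τ(σ⁻¹ξ)` equals `1` for `τ ∈ K` and `0` for `τ ∉ K`.  Let `p` be a
prime unramified in `L`, `𝔭` a prime of `L` above `p` with Frobenius `Frob_𝔭`, and assume
each `z_σ` is `𝔭`-integral and each `a_i` is `p`-integral.  Then `a_p ≡ 1 (mod p)` if
`Frob_𝔭 ∈ K` and `a_p ≡ 0 (mod p)` otherwise. -/
theorem stmt12 (L : Type*) [Field L] [CharZero L] [FiniteDimensional ℚ L] [IsGalois ℚ L]
    [DecidableEq (L ≃ₐ[ℚ] L)]
    (d : ℕ) (hd : 0 < d) (hdeg : Module.finrank ℚ L = d)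
    (c : Fin d → ℤ) (F : Polynomial ℤ)
    (hF : F = Polynomial.X ^ d + ∑ j : Fin d, Polynomial.C (c j) * Polynomial.X ^ (j : ℕ))
    (hFirr : Irreducible (F.map (Int.castRingHom ℚ)))
    (ξ : L) (hξ : Polynomial.aeval ξ F = 0)
    (K : ConjClasses (L ≃ₐ[ℚ] L)) [DecidablePred (· ∈ K.carrier)]
    (a : ℕ → ℚ)
    (ha : ∀ i, a (i + d) = -∑ j : Fin d, (c j : ℚ) * a (i + (j : ℕ)))
    (z : (L ≃ₐ[ℚ] L) → L)
    (hz : ∀ i : Fin d, algebraMap ℚ L (a (i : ℕ)) =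
      ∑ σ : L ≃ₐ[ℚ] L, z σ * (σ⁻¹ ξ) ^ (i : ℕ))
    (hK : ∀ τ : L ≃ₐ[ℚ] L,
      (∑ σ : L ≃ₐ[ℚ] L, z σ * τ (σ⁻¹ ξ)) = if τ ∈ K.carrier then 1 else 0)
    (p : ℕ) (hp : p.Prime)
    (hunram : ∀ 𝔮 : Ideal (NumberField.RingOfIntegers L), 𝔮.IsMaximal →
      (p : NumberField.RingOfIntegers L) ∈ 𝔮 → 𝔮 ^ 2 ∣ Ideal.span {(p : NumberField.RingOfIntegers L)} → False)
    (𝔭 : Ideal (NumberField.RingOfIntegers L)) (h𝔭 : 𝔭.IsMaximal)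
    (hp𝔭 : (p : NumberField.RingOfIntegers L) ∈ 𝔭)
    (Frob : L ≃ₐ[ℚ] L)
    (hFrob : ∀ x y : NumberField.RingOfIntegers L,
      algebraMap (NumberField.RingOfIntegers L) L y =
        Frob (algebraMap (NumberField.RingOfIntegers L) L x) →
      y - x ^ p ∈ 𝔭)
    (hzint : ∀ σ : L ≃ₐ[ℚ] L, IsPIntegral L 𝔭 (z σ))
    (haint : ∀ i : ℕ, ∃ m n : ℤ, ¬ (p : ℤ) ∣ n ∧ a i * (n : ℚ) = (m : ℚ)) :
    (Frob ∈ K.carrier → RatModEq p (a p) 1) ∧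
      (Frob ∉ K.carrier → RatModEq p (a p) 0) :=
  stmt12_general L d c F hF ξ hξ K a ha z hz hK p hp 𝔭 h𝔭 hp𝔭 Frob hFrob hzint haint
end

section
/- For every conjugacy class K_j of G and every integer i ≥ 0, the element a_{K_j,i} = (1/det Γ_ξ) · Σ_{σ∈G} Σ_{τ∈K_j} σ(ξ^i) · ∂_{στ}(ξ) of L is fixed by every γ ∈ G; hence a_{K_j,i} is a rational number. -/
open scoped BigOperators

/-- The element `a_{K,i} = (1/det Γ_ξ) Σ_{σ∈G} Σ_{τ∈K} σ(ξ^i) ∂_{στ}(ξ)` of `L`, where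
`K` is a conjugacy class of `G = Gal(L/ℚ)` and `∂_τ(ξ)`, `Γ_ξ` are the evaluations
at `X_σ = σξ`. -/
noncomputable def aTerm (L : Type*) [Field L] [CharZero L]
    [Fintype (L ≃ₐ[ℚ] L)] [DecidableEq (L ≃ₐ[ℚ] L)]
    (ξ : L) (K : ConjClasses (L ≃ₐ[ℚ] L)) [DecidablePred (· ∈ K.carrier)] (i : ℕ) : L :=
  ((Matrix.of fun σ τ : L ≃ₐ[ℚ] L => (σ * τ⁻¹) ξ).det)⁻¹ *
    ∑ σ : L ≃ₐ[ℚ] L, ∑ τ : L ≃ₐ[ℚ] L,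
      if τ ∈ K.carrier then
        σ (ξ ^ i) *
          MvPolynomial.aeval (fun ρ : L ≃ₐ[ℚ] L => ρ ξ) (groupDetDeriv _ (σ * τ))
      else 0

/-!
Applying `γ ∈ G` to an evaluation at `X_σ = σξ` amounts to substituting `X_σ ↦ X_{γσ}`. On the
group matrix this substitution permutes the rows by `σ ↦ γσ`, so it multiplies `det Γ` by the
sign `ε` of that permutation and sends `∂_τ` to `ε ∂_{γτ}`. Hence `γ` multiplies both `det Γ_ξ`
and the double sum defining `a_{K,i}` by `ε` (after reindexing `σ ↦ γσ`), and their quotient is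
fixed by `G`, so it lies in `ℚ` by Galois theory.
-/

open MvPolynomial

section GroupMatrix

variable {G : Type*} [Group G] [Fintype G] [DecidableEq G]

theorem rename_mul_left_groupMatrix_det (γ : G) :
    rename (γ * ·) (groupMatrix G).det =
      (Equiv.Perm.sign (Equiv.mulLeft γ) : ℤ) • (groupMatrix G).det := by
  calc rename (γ * ·) (groupMatrix G).det
      = ((groupMatrix G).map (rename (γ * ·))).det := RingHom.map_det _ _
    _ = ((groupMatrix G).submatrix (Equiv.mulLeft γ) id).det := by
      congr 1
      ext σ τ
      simp [groupMatrix, mul_assoc]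
    _ = _ := by rw [Matrix.det_permute, zsmul_eq_mul]

theorem rename_mul_left_groupDetDeriv (γ τ : G) :
    rename (γ * ·) (groupDetDeriv G τ) =
      (Equiv.Perm.sign (Equiv.mulLeft γ) : ℤ) • groupDetDeriv G (γ * τ) := by
  rw [groupDetDeriv, groupDetDeriv, map_smul, ← pderiv_rename (mul_right_injective γ),
    rename_mul_left_groupMatrix_det, map_zsmul, smul_comm]

end GroupMatrix

section Evaluation

variable {L : Type*} [Field L] [Algebra ℚ L]

theorem AlgEquiv.apply_aeval_orbit (γ : L ≃ₐ[ℚ] L) (ξ : L) (p : MvPolynomial (L ≃ₐ[ℚ] L) ℚ) :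
    γ (aeval (fun ρ : L ≃ₐ[ℚ] L => ρ ξ) p) =
      aeval (fun ρ : L ≃ₐ[ℚ] L => ρ ξ) (rename (γ * ·) p) := by
  rw [aeval_rename]
  exact comp_aeval_apply (f := fun ρ : L ≃ₐ[ℚ] L => ρ ξ) γ.toAlgHom p

variable [Fintype (L ≃ₐ[ℚ] L)] [DecidableEq (L ≃ₐ[ℚ] L)]

theorem aeval_orbit_groupMatrix_det (ξ : L) :
    aeval (fun ρ : L ≃ₐ[ℚ] L => ρ ξ) (groupMatrix (L ≃ₐ[ℚ] L)).det =
      (Matrix.of fun σ τ : L ≃ₐ[ℚ] L => (σ * τ⁻¹) ξ).det := by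
  rw [AlgHom.map_det]
  congr 1
  ext σ τ
  simp [groupMatrix]

theorem AlgEquiv.apply_groupMatrix_det_orbit (γ : L ≃ₐ[ℚ] L) (ξ : L) :
    γ (Matrix.of fun σ τ : L ≃ₐ[ℚ] L => (σ * τ⁻¹) ξ).det =
      (Equiv.Perm.sign (Equiv.mulLeft γ) : L) *
        (Matrix.of fun σ τ : L ≃ₐ[ℚ] L => (σ * τ⁻¹) ξ).det := by
  rw [← aeval_orbit_groupMatrix_det, γ.apply_aeval_orbit, rename_mul_left_groupMatrix_det,
    map_zsmul, zsmul_eq_mul]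

theorem AlgEquiv.apply_groupDetDeriv_orbit (γ τ : L ≃ₐ[ℚ] L) (ξ : L) :
    γ (aeval (fun ρ : L ≃ₐ[ℚ] L => ρ ξ) (groupDetDeriv _ τ)) =
      (Equiv.Perm.sign (Equiv.mulLeft γ) : L) *
        aeval (fun ρ : L ≃ₐ[ℚ] L => ρ ξ) (groupDetDeriv _ (γ * τ)) := by
  rw [γ.apply_aeval_orbit, rename_mul_left_groupDetDeriv, map_zsmul, zsmul_eq_mul]

theorem AlgEquiv.apply_sum_mul_groupDetDeriv_orbit (γ : L ≃ₐ[ℚ] L) (ξ y : L)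
    (s : Set (L ≃ₐ[ℚ] L)) [DecidablePred (· ∈ s)] :
    γ (∑ σ : L ≃ₐ[ℚ] L, ∑ τ : L ≃ₐ[ℚ] L,
        if τ ∈ s then σ y * aeval (fun ρ : L ≃ₐ[ℚ] L => ρ ξ) (groupDetDeriv _ (σ * τ)) else 0) =
      (Equiv.Perm.sign (Equiv.mulLeft γ) : L) * ∑ σ : L ≃ₐ[ℚ] L, ∑ τ : L ≃ₐ[ℚ] L,
        if τ ∈ s then σ y * aeval (fun ρ : L ≃ₐ[ℚ] L => ρ ξ) (groupDetDeriv _ (σ * τ)) else 0 := by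
  rw [map_sum, Finset.mul_sum]
  refine Fintype.sum_equiv (Equiv.mulLeft γ) _ _ fun σ => ?_
  rw [map_sum, Finset.mul_sum]
  refine Finset.sum_congr rfl fun τ _ => ?_
  split_ifs
  · rw [map_mul, γ.apply_groupDetDeriv_orbit, mul_left_comm]
    rfl
  · rw [map_zero, mul_zero]

end Evaluation

theorem inv_intUnit_mul_mul_intUnit_mul {L : Type*} [Field L] (ε : ℤˣ) (a b : L) :
    ((ε : L) * a)⁻¹ * ((ε : L) * b) = a⁻¹ * b := by
  have hε : (ε : L) ≠ 0 := (ε.isUnit.map (Int.castRingHom L)).ne_zero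
  rw [mul_inv, mul_mul_mul_comm, inv_mul_cancel₀ hε, one_mul]

theorem AlgEquiv.apply_aTerm {L : Type*} [Field L] [CharZero L] [Fintype (L ≃ₐ[ℚ] L)]
    [DecidableEq (L ≃ₐ[ℚ] L)] (γ : L ≃ₐ[ℚ] L) (ξ : L) (K : ConjClasses (L ≃ₐ[ℚ] L))
    [DecidablePred (· ∈ K.carrier)] (i : ℕ) :
    γ (aTerm L ξ K i) = aTerm L ξ K i := by
  rw [aTerm, map_mul, map_inv₀, γ.apply_groupMatrix_det_orbit,
    γ.apply_sum_mul_groupDetDeriv_orbit, inv_intUnit_mul_mul_intUnit_mul]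

theorem stmt17_general (L : Type*) [Field L] [CharZero L] [FiniteDimensional ℚ L] [IsGalois ℚ L]
    [DecidableEq (L ≃ₐ[ℚ] L)]
    (ξ : L)
    (K : ConjClasses (L ≃ₐ[ℚ] L)) [DecidablePred (· ∈ K.carrier)] (i : ℕ) :
    (∀ γ : L ≃ₐ[ℚ] L, γ (aTerm L ξ K i) = aTerm L ξ K i) ∧
      ∃ q : ℚ, aTerm L ξ K i = algebraMap ℚ L q := by
  have hfixed : ∀ γ : L ≃ₐ[ℚ] L, γ (aTerm L ξ K i) = aTerm L ξ K i :=
    fun γ => γ.apply_aTerm ξ K i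
  obtain ⟨q, hq⟩ := (IsGalois.mem_range_algebraMap_iff_fixed _).mpr hfixed
  exact ⟨hfixed, q, hq.symm⟩

/-- For every conjugacy class `K` of `G` and every `i ≥ 0`, the element
`a_{K,i} = (1/det Γ_ξ) Σ_{σ∈G} Σ_{τ∈K} σ(ξ^i) ∂_{στ}(ξ)` is fixed by every `γ ∈ G`, and
hence is a rational number. -/
theorem stmt17 (L : Type*) [Field L] [CharZero L] [FiniteDimensional ℚ L] [IsGalois ℚ L]
    [DecidableEq (L ≃ₐ[ℚ] L)]
    (d : ℕ) (hd : 0 < d)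
    (c : Fin d → ℤ) (F : Polynomial ℤ)
    (hF : F = Polynomial.X ^ d + ∑ j : Fin d, Polynomial.C (c j) * Polynomial.X ^ (j : ℕ))
    (hFirr : Irreducible (F.map (Int.castRingHom ℚ)))
    (ξ : L) (hξ : Polynomial.aeval ξ F = 0)
    (hNB : ∃ b : Module.Basis (L ≃ₐ[ℚ] L) ℚ L, ∀ σ : L ≃ₐ[ℚ] L, b σ = σ ξ)
    (K : ConjClasses (L ≃ₐ[ℚ] L)) [DecidablePred (· ∈ K.carrier)] (i : ℕ) :
    (∀ γ : L ≃ₐ[ℚ] L, γ (aTerm L ξ K i) = aTerm L ξ K i) ∧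
      ∃ q : ℚ, aTerm L ξ K i = algebraMap ℚ L q :=
  stmt17_general L ξ K i
end
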